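/- arXiv:1809.09531 — 2 statements merged into one kernel-verified Lean document; each statement's English description precedes it below -/
import Mathlib

section
/- Let s ≥ 1 and σ > 1/2. Suppose (u_k)_{k≥0} and (f_k)_{k≥0} are square-summable sequences of reals satisfying π^s(k^s − σ^s)·u_k = f_k for all k ≠ k₀, where k₀ is the nearest integer to σ. Then there is a constant C depending only on s such that Σ_{k≠k₀} u_k² ≤ C·σ^{2−2s}·Σ_k f_k². -/
/-! Away from the nearest integer `k₀` to `σ`, every integer satisfies `|k - σ| ≥ 1/2`, and
for `s ≥ 1` the map `x ↦ x ^ s` has slope at least `σ ^ (s - 1)` on the segment between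
`σ` and `k`. Hence `|k ^ s - σ ^ s| ≥ σ ^ (s - 1) / 2`, and dividing the equation by
`π ^ s (k ^ s - σ ^ s)` bounds `u_k²` by `4 π^(-2s) σ^(2-2s) f_k²` term by term. -/

open Real

/-- The nearest integer to `σ`, choosing the smaller one at half-integers. -/
noncomputable def nearestInt (σ : ℝ) : ℤ := ⌈σ - 1 / 2⌉

lemma half_le_abs_sub_of_ne_nearestInt {σ : ℝ} {k : ℤ} (h : k ≠ nearestInt σ) :
    1 / 2 ≤ |(k : ℝ) - σ| := by
  have h_le : σ - 1 / 2 ≤ (nearestInt σ : ℝ) := Int.le_ceil _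
  have h_lt : (nearestInt σ : ℝ) < σ - 1 / 2 + 1 := Int.ceil_lt_add_one _
  rcases h.lt_or_gt with hk | hk
  · have : (k : ℝ) + 1 ≤ nearestInt σ := by exact_mod_cast hk
    rw [abs_sub_comm]
    exact le_abs.mpr (.inl (by linarith))
  · have : (nearestInt σ : ℝ) + 1 ≤ k := by exact_mod_cast hk
    exact le_abs.mpr (.inl (by linarith))

lemma rpow_sub_one_mul_sub_le_rpow_sub_rpow {s a b : ℝ} (hs : 1 ≤ s) (hb : 0 ≤ b)
    (hba : b ≤ a) : a ^ (s - 1) * (a - b) ≤ a ^ s - b ^ s := by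
  have hs' : s - 1 + 1 ≠ 0 := by linarith
  have h_split : ∀ x : ℝ, 0 ≤ x → x ^ s = x ^ (s - 1) * x := fun x hx => by
    simpa using rpow_add' hx hs' (y := s - 1) (z := 1)
  have h_mono : b ^ (s - 1) ≤ a ^ (s - 1) := rpow_le_rpow hb hba (by linarith)
  rw [h_split a (hb.trans hba), h_split b hb]
  nlinarith [mul_le_mul_of_nonneg_right h_mono hb]

lemma rpow_sub_one_mul_abs_sub_le_abs_rpow_sub_rpow {s x y : ℝ} (hs : 1 ≤ s) (hx : 0 ≤ x)
    (hy : 0 ≤ y) : y ^ (s - 1) * |x - y| ≤ |x ^ s - y ^ s| := by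
  rcases le_total y x with hyx | hxy
  · have h_mono : y ^ (s - 1) ≤ x ^ (s - 1) := rpow_le_rpow hy hyx (by linarith)
    have h_pow : y ^ s ≤ x ^ s := rpow_le_rpow hy hyx (by linarith)
    rw [abs_of_nonneg (sub_nonneg.mpr hyx), abs_of_nonneg (sub_nonneg.mpr h_pow)]
    exact (mul_le_mul_of_nonneg_right h_mono (sub_nonneg.mpr hyx)).trans
      (rpow_sub_one_mul_sub_le_rpow_sub_rpow hs hy hyx)
  · have h_pow : x ^ s ≤ y ^ s := rpow_le_rpow hx hxy (by linarith)
    rw [abs_of_nonpos (sub_nonpos.mpr hxy), abs_of_nonpos (sub_nonpos.mpr h_pow), neg_sub,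
      neg_sub]
    exact rpow_sub_one_mul_sub_le_rpow_sub_rpow hs hx hxy

lemma rpow_sub_one_div_two_le_abs_rpow_sub_rpow {s σ : ℝ} (hs : 1 ≤ s) (hσ : 0 ≤ σ) {k : ℕ}
    (hk : (k : ℤ) ≠ nearestInt σ) : σ ^ (s - 1) / 2 ≤ |(k : ℝ) ^ s - σ ^ s| :=
  calc σ ^ (s - 1) / 2 = σ ^ (s - 1) * (1 / 2) := by ring
    _ ≤ σ ^ (s - 1) * |(k : ℝ) - σ| :=
        mul_le_mul_of_nonneg_left (mod_cast half_le_abs_sub_of_ne_nearestInt hk)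
          (rpow_nonneg hσ _)
    _ ≤ |(k : ℝ) ^ s - σ ^ s| :=
        rpow_sub_one_mul_abs_sub_le_abs_rpow_sub_rpow hs k.cast_nonneg hσ

lemma sq_le_of_mul_abs_le {c u f : ℝ} (hc : 0 < c) (h : c * |u| ≤ |f|) :
    u ^ 2 ≤ (c ^ 2)⁻¹ * f ^ 2 := by
  rw [inv_mul_eq_div, le_div_iff₀ (by positivity), ← sq_abs u, ← sq_abs f, ← mul_pow, mul_comm]
  exact pow_le_pow_left₀ (by positivity) h 2

lemma tsum_subtype_le_mul_tsum {ι : Type*} {p : ι → Prop} {u f : ι → ℝ} {C : ℝ} (hC : 0 ≤ C)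
    (hu : Summable u) (hf : Summable f) (hf_nonneg : ∀ i, 0 ≤ f i)
    (h : ∀ i, p i → u i ≤ C * f i) :
    ∑' i : {i // p i}, u i ≤ C * ∑' i, f i :=
  calc ∑' i : {i // p i}, u i ≤ ∑' i : {i // p i}, C * f i :=
        (hu.subtype _).tsum_le_tsum (fun i => h i i.2) ((hf.subtype _).mul_left C)
    _ = C * ∑' i : {i // p i}, f i := tsum_mul_left
    _ ≤ C * ∑' i, f i :=
        mul_le_mul_of_nonneg_left (hf.tsum_subtype_le f {i | p i} hf_nonneg) hC

/-- Let `s ≥ 1`. There is `C = C(s) > 0` such that for all `σ > 1/2` and square-summable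
real sequences `(u_k)`, `(f_k)` with `π^s (k^s − σ^s) u_k = f_k` for all `k ≠ k₀`
(`k₀` the nearest integer to `σ`), one has `Σ_{k ≠ k₀} u_k² ≤ C σ^(2−2s) Σ_k f_k²`. -/
theorem stmt7 (s : ℝ) (hs : 1 ≤ s) :
    ∃ C : ℝ, 0 < C ∧ ∀ (σ : ℝ), 1 / 2 < σ → ∀ u f : ℕ → ℝ,
      Summable (fun k => (u k) ^ 2) → Summable (fun k => (f k) ^ 2) →
      (∀ k : ℕ, (k : ℤ) ≠ nearestInt σ →
        π ^ s * ((k : ℝ) ^ s - σ ^ s) * u k = f k) →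
      (∑' k : {k : ℕ // (k : ℤ) ≠ nearestInt σ}, (u k) ^ 2) ≤
        C * σ ^ (2 - 2 * s) * ∑' k : ℕ, (f k) ^ 2 := by
  have hπ : 0 < π ^ s := rpow_pos_of_pos pi_pos s
  refine ⟨4 / (π ^ s) ^ 2, by positivity, fun σ hσ u f hu hf heq => ?_⟩
  have hσ0 : 0 < σ := by linarith
  have hc : 0 < π ^ s * (σ ^ (s - 1) / 2) := by positivity
  have hC : ((π ^ s * (σ ^ (s - 1) / 2)) ^ 2)⁻¹ = 4 / (π ^ s) ^ 2 * σ ^ (2 - 2 * s) := by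
    rw [show 2 - 2 * s = -((s - 1) * 2) by ring, rpow_neg hσ0.le, rpow_mul hσ0.le, rpow_two]
    field_simp
    norm_num
  refine tsum_subtype_le_mul_tsum (by positivity) hu hf (fun _ => sq_nonneg _) fun k hk => ?_
  rw [← hC]
  refine sq_le_of_mul_abs_le hc ?_
  rw [← heq k hk, abs_mul, abs_mul, abs_of_pos hπ]
  gcongr
  exact rpow_sub_one_div_two_le_abs_rpow_sub_rpow hs hσ0.le hk
end

section
/- Let 0 < s < 1 and σ > 1/2. Suppose (u_k)_{k≥0}, (f_k)_{k≥0} are square-summable real sequences with π^s(k^s − σ^s)·u_k = f_k for all nonnegative integers k ≠ k₀, where k₀ is the nearest integer to σ. Then there exists a constant C depending only on s such that Σ_{k≠k₀} u_k² ≤ C·σ^{2(1−s)}·Σ_k f_k². -/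
open Real

/-- Concavity bound: `s * x^(s-1) * (x - y) ≤ x^s - y^s` for `0 ≤ y ≤ x`, `0 < x`. -/
lemma concave_bound (s : ℝ) (hs0 : 0 < s) (hs1 : s < 1) {x y : ℝ} (hy : 0 ≤ y)
    (hxy : y ≤ x) (hx : 0 < x) : s * x ^ (s - 1) * (x - y) ≤ x ^ s - y ^ s := by
  have hx0 : x ≠ 0 := hx.ne'
  have h1 : y ^ s = x ^ s * (y / x) ^ s := by
    rw [← Real.mul_rpow hx.le (by positivity)]
    rw [mul_div_cancel₀ _ hx0]
  have hb : (y / x) ^ s ≤ 1 + s * (y / x - 1) := by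
    have h := rpow_one_add_le_one_add_mul_self (s := y / x - 1)
      (p := s) (by have hq := div_nonneg hy hx.le; linarith) hs0.le hs1.le
    simpa using h
  have hxs : x ^ (s - 1) * x = x ^ s := by
    rw [← Real.rpow_add_one hx0 (s - 1)]; ring_nf
  have hxsy : x ^ s * (y / x) = x ^ (s - 1) * y := by
    rw [← hxs]; field_simp
  have hxsp : 0 < x ^ s := Real.rpow_pos_of_pos hx s
  have h2 : y ^ s ≤ x ^ s + s * (x ^ (s - 1) * y) - s * x ^ s := by
    calc y ^ s = x ^ s * (y / x) ^ s := h1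
      _ ≤ x ^ s * (1 + s * (y / x - 1)) := by
          exact mul_le_mul_of_nonneg_left hb hxsp.le
      _ = x ^ s + s * (x ^ s * (y / x)) - s * x ^ s := by ring
      _ = x ^ s + s * (x ^ (s - 1) * y) - s * x ^ s := by rw [hxsy]
  nlinarith [hxs]

/-- The key spectral gap bound. -/
lemma key_bound (s σ x : ℝ) (hs0 : 0 < s) (hs1 : s < 1) (hσ : 1 / 2 < σ)
    (hx : 0 ≤ x) (hd : 1 / 2 ≤ |x - σ|) :
    s / 4 * σ ^ (s - 1) ≤ |x ^ s - σ ^ s| := by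
  have hσ0 : 0 < σ := by linarith
  have hAσ : 0 < σ ^ (s - 1) := Real.rpow_pos_of_pos hσ0 (s - 1)
  rcases le_or_gt x σ with h | h
  · have hxd : 1 / 2 ≤ σ - x := by
      rw [abs_of_nonpos (by linarith)] at hd; linarith
    have hcb := concave_bound s hs0 hs1 hx h hσ0
    have habs : |x ^ s - σ ^ s| = σ ^ s - x ^ s := by
      rw [abs_of_nonpos (by linarith [Real.rpow_le_rpow hx h hs0.le])]; ring
    rw [habs]
    nlinarith [mul_nonneg (mul_nonneg hs0.le hAσ.le) (show (0:ℝ) ≤ σ - x - 1/2 by linarith),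
      mul_pos hs0 hAσ]
  · have hxpos : 0 < x := by linarith
    have habs : |x ^ s - σ ^ s| = x ^ s - σ ^ s :=
      abs_of_nonneg (by linarith [Real.rpow_le_rpow hσ0.le h.le hs0.le])
    rw [habs]
    have hcb := concave_bound s hs0 hs1 hσ0.le h.le hxpos
    have hAx : 0 < x ^ (s - 1) := Real.rpow_pos_of_pos hxpos (s - 1)
    rcases le_or_gt x (2 * σ) with h2 | h2
    · have hxd : 1 / 2 ≤ x - σ := by
        rw [abs_of_nonneg (by linarith)] at hd; linarith
      have hpow : (2 * σ) ^ (s - 1) ≤ x ^ (s - 1) :=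
        Real.rpow_le_rpow_of_nonpos hxpos h2 (by linarith)
      have h2s : σ ^ (s - 1) / 2 ≤ (2 * σ) ^ (s - 1) := by
        rw [Real.mul_rpow (by norm_num) hσ0.le]
        have hh : (2:ℝ) ^ (-1:ℝ) ≤ 2 ^ (s - 1) :=
          Real.rpow_le_rpow_of_exponent_le one_le_two (by linarith)
        rw [show ((-1:ℝ)) = -1 from rfl, Real.rpow_neg_one] at hh
        nlinarith
      nlinarith [mul_nonneg (mul_nonneg hs0.le hAx.le) (show (0:ℝ) ≤ x - σ - 1/2 by linarith),
        mul_le_mul_of_nonneg_left hpow hs0.le, mul_le_mul_of_nonneg_left h2s hs0.le]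
    · have hxs : x ^ (s - 1) * x = x ^ s := by
        rw [← Real.rpow_add_one hxpos.ne' (s - 1)]; ring_nf
      have hσs : σ ^ (s - 1) * σ = σ ^ s := by
        rw [← Real.rpow_add_one hσ0.ne' (s - 1)]; ring_nf
      have hmono : σ ^ s ≤ x ^ s := Real.rpow_le_rpow hσ0.le (by linarith) hs0.le
      nlinarith [mul_nonneg (mul_nonneg hs0.le hAx.le) (show (0:ℝ) ≤ x - σ - x/2 by linarith),
        mul_le_mul_of_nonneg_left hmono hs0.le,
        mul_nonneg (mul_nonneg hs0.le hAσ.le) (show (0:ℝ) ≤ σ - 1/2 by linarith)]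

/-- Integers other than the nearest integer are at distance at least `1/2`. -/
lemma dist_ge_half (σ : ℝ) (m : ℤ) (hm : m ≠ nearestInt σ) : 1 / 2 ≤ |(m : ℝ) - σ| := by
  unfold nearestInt at hm
  rcases lt_or_gt_of_ne hm with h | h
  · have h1 : m ≤ ⌈σ - 1 / 2⌉ - 1 := by omega
    have h2 : ((⌈σ - 1 / 2⌉ : ℝ)) < σ - 1 / 2 + 1 := Int.ceil_lt_add_one _
    have h3 : (m : ℝ) ≤ (⌈σ - 1 / 2⌉ : ℝ) - 1 := by exact_mod_cast Int.cast_le.mpr h1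
    rw [abs_of_nonpos (by linarith)]; linarith
  · have h1 : ⌈σ - 1 / 2⌉ + 1 ≤ m := by omega
    have h2 : σ - 1 / 2 ≤ ((⌈σ - 1 / 2⌉ : ℝ)) := Int.le_ceil _
    have h3 : (⌈σ - 1 / 2⌉ : ℝ) + 1 ≤ (m : ℝ) := by exact_mod_cast Int.cast_le.mpr h1
    rw [abs_of_nonneg (by linarith)]; linarith

/-- Let `0 < s < 1`. There is `C = C(s) > 0` such that for all `σ > 1/2` and square-summable
real sequences `(u_k)`, `(f_k)` with `π^s (k^s − σ^s) u_k = f_k` for all `k ≠ k₀`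
(`k₀` the nearest integer to `σ`), one has `Σ_{k ≠ k₀} u_k² ≤ C σ^(2(1−s)) Σ_k f_k²`. -/
theorem stmt8 (s : ℝ) (hs0 : 0 < s) (hs1 : s < 1) :
    ∃ C : ℝ, 0 < C ∧ ∀ (σ : ℝ), 1 / 2 < σ → ∀ u f : ℕ → ℝ,
      Summable (fun k => (u k) ^ 2) → Summable (fun k => (f k) ^ 2) →
      (∀ k : ℕ, (k : ℤ) ≠ nearestInt σ →
        π ^ s * ((k : ℝ) ^ s - σ ^ s) * u k = f k) →
      (∑' k : {k : ℕ // (k : ℤ) ≠ nearestInt σ}, (u k) ^ 2) ≤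
        C * σ ^ (2 * (1 - s)) * ∑' k : ℕ, (f k) ^ 2 := by
  refine ⟨16 / s ^ 2, by positivity, fun σ hσ u f hu hf hEq => ?_⟩
  have hσ0 : 0 < σ := by linarith
  set A := σ ^ (s - 1) with hA
  have hApos : 0 < A := Real.rpow_pos_of_pos hσ0 (s - 1)
  set σ' := σ ^ (2 * (1 - s)) with hσ'
  have hσ'pos : 0 < σ' := Real.rpow_pos_of_pos hσ0 _
  have hprod : σ' * (A * A) = 1 := by
    rw [hσ', hA, ← Real.rpow_add hσ0, ← Real.rpow_add hσ0]
    rw [show 2 * (1 - s) + (s - 1 + (s - 1)) = 0 by ring, Real.rpow_zero]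
  have hone : 16 / s ^ 2 * σ' * (s / 4 * A) ^ 2 = 1 := by
    have h2 : 16 / s ^ 2 * σ' * (s / 4 * A) ^ 2
        = (16 / s ^ 2 * (s ^ 2 / 16)) * (σ' * (A * A)) := by ring
    rw [h2, hprod]
    field_simp
  have key2 : ∀ k : ℕ, (k : ℤ) ≠ nearestInt σ →
      u k ^ 2 ≤ 16 / s ^ 2 * σ' * f k ^ 2 := by
    intro k hk
    have hd : 1 / 2 ≤ |(k : ℝ) - σ| := by
      have := dist_ge_half σ k hk
      push_cast at this ⊢
      exact this
    have hkey := key_bound s σ (k : ℝ) hs0 hs1 hσ (Nat.cast_nonneg k) hd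
    have hπ : (1 : ℝ) ≤ π ^ s :=
      Real.one_le_rpow (by linarith [Real.pi_gt_three]) hs0.le
    have h1 : s / 4 * A * |u k| ≤ |f k| := by
      rw [← hEq k hk, abs_mul, abs_mul, abs_of_nonneg (le_trans zero_le_one hπ)]
      calc s / 4 * A * |u k|
          ≤ |(k : ℝ) ^ s - σ ^ s| * |u k| :=
            mul_le_mul_of_nonneg_right hkey (abs_nonneg _)
        _ ≤ π ^ s * |(k : ℝ) ^ s - σ ^ s| * |u k| := by
            nlinarith [mul_nonneg (mul_nonneg (show (0:ℝ) ≤ π ^ s - 1 by linarith)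
              (abs_nonneg ((k : ℝ) ^ s - σ ^ s))) (abs_nonneg (u k))]
    have hsq : (s / 4 * A) ^ 2 * u k ^ 2 ≤ f k ^ 2 := by
      nlinarith [abs_nonneg (u k), abs_nonneg (f k), sq_abs (u k), sq_abs (f k),
        mul_le_mul_of_nonneg_left h1 (show (0:ℝ) ≤ s / 4 * A by positivity),
        mul_le_mul_of_nonneg_right h1 (abs_nonneg (f k))]
    calc u k ^ 2 = 16 / s ^ 2 * σ' * (s / 4 * A) ^ 2 * u k ^ 2 := by rw [hone]; ring
      _ = 16 / s ^ 2 * σ' * ((s / 4 * A) ^ 2 * u k ^ 2) := by ring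
      _ ≤ 16 / s ^ 2 * σ' * f k ^ 2 := mul_le_mul_of_nonneg_left hsq (by positivity)
  have husub : Summable (fun k : {k : ℕ // (k : ℤ) ≠ nearestInt σ} => u k ^ 2) :=
    hu.subtype _
  have hfsub : Summable (fun k : {k : ℕ // (k : ℤ) ≠ nearestInt σ} =>
      16 / s ^ 2 * σ' * f k ^ 2) := by
    exact ((hf.mul_left (16 / s ^ 2 * σ')).subtype _)
  calc (∑' k : {k : ℕ // (k : ℤ) ≠ nearestInt σ}, (u k) ^ 2)
      ≤ ∑' k : {k : ℕ // (k : ℤ) ≠ nearestInt σ}, 16 / s ^ 2 * σ' * f k ^ 2 :=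
        Summable.tsum_le_tsum (fun k => key2 k k.2) husub hfsub
    _ = 16 / s ^ 2 * σ' * ∑' k : {k : ℕ // (k : ℤ) ≠ nearestInt σ}, f k ^ 2 :=
        tsum_mul_left
    _ ≤ 16 / s ^ 2 * σ' * ∑' k : ℕ, f k ^ 2 := by
        refine mul_le_mul_of_nonneg_left ?_ (by positivity)
        exact Summable.tsum_subtype_le (fun k => f k ^ 2) _ (fun k => sq_nonneg _) hf
end
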